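/- arXiv:2105.08232 — 2 statements merged into one kernel-verified Lean document; each statement's English description precedes it below -/
import Mathlib

section
/- (Inequality (25) in the proof of Lemma 3.) Let X̂, Z ∈ ℝ^{n×r}, let P ∈ ℝ^{n×n} be the orthogonal projection onto the column space of X̂ and P⊥ = I_n − P, let R ∈ ℝ^{r×r} satisfy PZ = X̂R, and define Ŷ = ½X̂ − ½X̂RRᵀ − P⊥ZRᵀ. Then ‖X̂Ŷᵀ + ŶX̂ᵀ‖_F² ≥ 2·tr(X̂ᵀX̂ŶᵀŶ) ≥ 2·σ_r(X̂)²·‖Ŷ‖_F², where σ_r(X̂) is the smallest singular value of X̂. -/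
open scoped BigOperators
open Matrix

noncomputable section

/-- Euclidean norm of a real vector indexed by `Fin k`. -/
def enorm' {k : ℕ} (v : Fin k → ℝ) : ℝ := Real.sqrt (∑ i, (v i) ^ 2)

/-- Frobenius norm of a real matrix. -/
def fnorm {a b : ℕ} (M : Matrix (Fin a) (Fin b) ℝ) : ℝ :=
  Real.sqrt (∑ i, ∑ j, (M i j) ^ 2)

/-- Frobenius inner product of two real matrices. -/
def finner {a b : ℕ} (M N : Matrix (Fin a) (Fin b) ℝ) : ℝ := ∑ i, ∑ j, M i j * N i j

open Classical in
/-- The `i`-th largest eigenvalue (`0`-indexed, i.e. `eigval M 0` is the largest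
eigenvalue and `eigval M ⟨k-1,_⟩` the smallest) of a real symmetric matrix
(junk value `0` if the matrix is not symmetric). -/
def eigval {k : ℕ} (M : Matrix (Fin k) (Fin k) ℝ) (i : Fin k) : ℝ :=
  if h : M.IsHermitian then
    h.eigenvalues (Tuple.sort h.eigenvalues ⟨k - 1 - i.val, by have := i.isLt; omega⟩)
  else 0

/-- Spectral norm of a real matrix: `√(λ₁(XᵀX))`. -/
def specNorm {a b : ℕ} (X : Matrix (Fin a) (Fin b) ℝ) : ℝ :=
  if hb : 0 < b then Real.sqrt (eigval (Xᵀ * X) ⟨0, hb⟩) else 0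

/-- Smallest singular value `σ_b(X)` of `X ∈ ℝ^{a×b}`: the square root of the
smallest eigenvalue of `XᵀX`. -/
def sigmaMin {a b : ℕ} (X : Matrix (Fin a) (Fin b) ℝ) : ℝ :=
  if hb : 0 < b then Real.sqrt (eigval (Xᵀ * X) ⟨b - 1, by omega⟩) else 0

/-- Vectorization of a square matrix. -/
def vecSq {n : ℕ} (M : Matrix (Fin n) (Fin n) ℝ) : Fin (n * n) → ℝ :=
  fun k => M (finProdFinEquiv.symm k).1 (finProdFinEquiv.symm k).2

/-- Vectorization of an `n × r` matrix. -/
def vecR {n r : ℕ} (U : Matrix (Fin n) (Fin r) ℝ) : Fin (n * r) → ℝ :=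
  fun k => U (finProdFinEquiv.symm k).1 (finProdFinEquiv.symm k).2

/-- `mat_S(v) = (V + Vᵀ)/2` where `vec V = v`. -/
def matS {n : ℕ} (v : Fin (n * n) → ℝ) : Matrix (Fin n) (Fin n) ℝ :=
  (1 / 2 : ℝ) • ((Matrix.of fun i j => v (finProdFinEquiv (i, j))) +
    (Matrix.of fun i j => v (finProdFinEquiv (i, j)))ᵀ)

/-- The sensing operator `𝒜(M) = (⟨A₁,M⟩, …, ⟨A_m,M⟩)`. -/
def calA {n m : ℕ} (A : Fin m → Matrix (Fin n) (Fin n) ℝ)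
    (M : Matrix (Fin n) (Fin n) ℝ) : Fin m → ℝ := fun i => finner (A i) M

/-- Matrix representation `𝐀 ∈ ℝ^{m×n²}` of `𝒜`, satisfying `𝐀 ⬝ vec M = 𝒜(M)`. -/
def bigA {n m : ℕ} (A : Fin m → Matrix (Fin n) (Fin n) ℝ) :
    Matrix (Fin m) (Fin (n * n)) ℝ := Matrix.of fun i k => vecSq (A i) k

/-- `𝒜` satisfies the `(δ, g)`-RIP property. -/
def RIP {n m : ℕ} (A : Fin m → Matrix (Fin n) (Fin n) ℝ) (δ : ℝ) (g : ℕ) : Prop :=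
  ∀ M : Matrix (Fin n) (Fin n) ℝ, M.rank ≤ g →
    (1 - δ) * fnorm M ^ 2 ≤ enorm' (calA A M) ^ 2 ∧
      enorm' (calA A M) ^ 2 ≤ (1 + δ) * fnorm M ^ 2

/-- The matrix `𝐗̂ ∈ ℝ^{n² × nr}` satisfying `𝐗̂ ⬝ vec U = vec (X̂Uᵀ + UX̂ᵀ)`. -/
def bigX {n r : ℕ} (X : Matrix (Fin n) (Fin r) ℝ) :
    Matrix (Fin (n * n)) (Fin (n * r)) ℝ :=
  Matrix.of fun k l =>
    (if (finProdFinEquiv.symm k).2 = (finProdFinEquiv.symm l).1 then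
      X (finProdFinEquiv.symm k).1 (finProdFinEquiv.symm l).2 else 0) +
    (if (finProdFinEquiv.symm k).1 = (finProdFinEquiv.symm l).1 then
      X (finProdFinEquiv.symm k).2 (finProdFinEquiv.symm l).2 else 0)

/-- The Kronecker product `I_r ⊗ G`, realized as an operator on vectorized
`n × r` matrices (it sends `vec U` to `vec (G * U)`). -/
def kronIdR {n : ℕ} (r : ℕ) (G : Matrix (Fin n) (Fin n) ℝ) :
    Matrix (Fin (n * r)) (Fin (n * r)) ℝ :=
  Matrix.of fun k l =>
    if (finProdFinEquiv.symm k).2 = (finProdFinEquiv.symm l).2 then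
      G (finProdFinEquiv.symm k).1 (finProdFinEquiv.symm l).1 else 0

/-- Loewner order: `A ⪯ B` iff `B - A` is positive semidefinite. -/
def PSDle {k : ℕ} (A B : Matrix (Fin k) (Fin k) ℝ) : Prop := (B - A).PosSemidef

/-- The objective `f(X) = ½‖𝒜(XXᵀ) − b + w‖²` with `b = 𝒜(M*)`. -/
def fobj {n m r : ℕ} (A : Fin m → Matrix (Fin n) (Fin n) ℝ)
    (Mstar : Matrix (Fin n) (Fin n) ℝ) (w : Fin m → ℝ)
    (X : Matrix (Fin n) (Fin r) ℝ) : ℝ :=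
  (1 / 2) * enorm' (fun i => calA A (X * Xᵀ) i - calA A Mstar i + w i) ^ 2

/-- View a point of Euclidean space as an `n × r` matrix. -/
def toMat {n r : ℕ} (x : EuclideanSpace ℝ (Fin n × Fin r)) : Matrix (Fin n) (Fin r) ℝ :=
  Matrix.of fun i j => x (i, j)

/-- View an `n × r` matrix as a point of Euclidean space (whose inner product is
the Frobenius inner product). -/
def vecE {n r : ℕ} (X : Matrix (Fin n) (Fin r) ℝ) : EuclideanSpace ℝ (Fin n × Fin r) :=
  WithLp.toLp 2 (fun p : Fin n × Fin r => X p.1 p.2)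

/-- The objective as a function on Euclidean space. -/
def fE {n m : ℕ} (r : ℕ) (A : Fin m → Matrix (Fin n) (Fin n) ℝ)
    (Mstar : Matrix (Fin n) (Fin n) ℝ) (w : Fin m → ℝ) :
    EuclideanSpace ℝ (Fin n × Fin r) → ℝ :=
  fun x => fobj A Mstar w (toMat x)

/-- Hessian quadratic form `D²f(X)[U, U]` (second Fréchet derivative). -/
def hessQF {n m : ℕ} (r : ℕ) (A : Fin m → Matrix (Fin n) (Fin n) ℝ)
    (Mstar : Matrix (Fin n) (Fin n) ℝ) (w : Fin m → ℝ)
    (X U : Matrix (Fin n) (Fin r) ℝ) : ℝ :=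
  iteratedFDeriv ℝ 2 (fE r A Mstar w) (vecE X) ![vecE U, vecE U]

/-- Gradient `∇f(X)` with respect to the Frobenius inner product, as a matrix. -/
def gradf {n m : ℕ} (r : ℕ) (A : Fin m → Matrix (Fin n) (Fin n) ℝ)
    (Mstar : Matrix (Fin n) (Fin n) ℝ) (w : Fin m → ℝ)
    (X : Matrix (Fin n) (Fin r) ℝ) : Matrix (Fin n) (Fin r) ℝ :=
  toMat (gradient (fE r A Mstar w) (vecE X))

/-! Since `X̂ᵀ P⊥ = 0`, the `P⊥ Z Rᵀ` term of `Ŷ` is invisible to `X̂ᵀ`, so `X̂ᵀŶ = X̂ᵀX̂ T` with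
`T = ½(I - RRᵀ)` symmetric. Expanding the square gives
`‖X̂Ŷᵀ + ŶX̂ᵀ‖² = 2 tr(X̂ᵀX̂ŶᵀŶ) + 2 tr((X̂ᵀŶ)²)`, and `tr((X̂ᵀX̂T)²) = ‖X̂TX̂ᵀ‖² ≥ 0`.
The second inequality is `X̂ᵀX̂ ⪰ σ_r(X̂)² I` paired with `ŶᵀŶ ⪰ 0`. -/

lemma fnorm_sq_eq_trace {a b : ℕ} (M : Matrix (Fin a) (Fin b) ℝ) :
    fnorm M ^ 2 = trace (Mᵀ * M) := by
  rw [fnorm, Real.sq_sqrt (by positivity), trace, Finset.sum_comm]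
  simp [Matrix.mul_apply, pow_two]

lemma fnorm_sq_mul_transpose_add {a b : ℕ} (X Y : Matrix (Fin a) (Fin b) ℝ) :
    fnorm (X * Yᵀ + Y * Xᵀ) ^ 2 =
      2 * trace (Xᵀ * X * (Yᵀ * Y)) + 2 * trace (Xᵀ * Y * (Xᵀ * Y)) := by
  have h₁ : trace (X * Yᵀ * (Y * Xᵀ)) = trace (Xᵀ * X * (Yᵀ * Y)) := by
    rw [trace_mul_comm (Xᵀ * X)]
    simp only [Matrix.mul_assoc]
    rw [trace_mul_comm X]
    simp only [Matrix.mul_assoc]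
  have h₂ : trace (Y * Xᵀ * (X * Yᵀ)) = trace (Xᵀ * X * (Yᵀ * Y)) := by
    rw [trace_mul_comm, h₁]
  have h₃ : trace (Y * Xᵀ * (Y * Xᵀ)) = trace (Xᵀ * Y * (Xᵀ * Y)) := by
    rw [Matrix.mul_assoc, trace_mul_comm]
    simp only [Matrix.mul_assoc]
  have h₄ : trace (X * Yᵀ * (X * Yᵀ)) = trace (Xᵀ * Y * (Xᵀ * Y)) := by
    rw [← h₃, ← trace_transpose]
    simp only [transpose_mul, transpose_transpose, Matrix.mul_assoc]
  rw [fnorm_sq_eq_trace]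
  simp only [transpose_add, transpose_mul, transpose_transpose, Matrix.add_mul, Matrix.mul_add,
    trace_add, h₁, h₂, h₃, h₄]
  ring

lemma trace_gram_mul_sq_nonneg {a b : ℕ} (X : Matrix (Fin a) (Fin b) ℝ)
    {T : Matrix (Fin b) (Fin b) ℝ} (hT : T.IsSymm) :
    0 ≤ trace (Xᵀ * X * T * (Xᵀ * X * T)) := by
  have hM : (X * T * Xᵀ)ᵀ = X * T * Xᵀ := by
    rw [transpose_mul, transpose_mul, hT.eq, transpose_transpose, Matrix.mul_assoc]
  have hgram : trace (Xᵀ * X * T * (Xᵀ * X * T)) = trace ((X * T * Xᵀ)ᵀ * (X * T * Xᵀ)) := by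
    rw [hM]
    simp only [Matrix.mul_assoc]
    rw [trace_mul_comm Xᵀ]
    simp only [Matrix.mul_assoc]
  rw [hgram, ← fnorm_sq_eq_trace]
  positivity

open scoped MatrixOrder Matrix.Norms.L2Operator in
lemma Matrix.IsHermitian.posSemidef_sub_smul_one {k : ℕ} {A : Matrix (Fin k) (Fin k) ℝ}
    (hA : A.IsHermitian) {c : ℝ} (hc : ∀ i, c ≤ hA.eigenvalues i) :
    (A - c • 1).PosSemidef := by
  rw [← le_iff, ← Algebra.algebraMap_eq_smul_one, algebraMap_le_iff_le_spectrum hA,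
    hA.spectrum_real_eq_range_eigenvalues]
  rintro _ ⟨i, rfl⟩
  exact hc i

lemma sigmaMin_sq_le_eigenvalues {a b : ℕ} (X : Matrix (Fin a) (Fin b) ℝ)
    (hX : (Xᵀ * X).IsHermitian) (i : Fin b) : sigmaMin X ^ 2 ≤ hX.eigenvalues i := by
  have hb : 0 < b := i.pos
  have hpsd : (Xᵀ * X).PosSemidef := by simpa using posSemidef_conjTranspose_mul_self X
  rw [sigmaMin, dif_pos hb, eigval, dif_pos hX, Real.sq_sqrt (hpsd.eigenvalues_nonneg _)]
  have hbottom : (⟨b - 1 - (b - 1), by omega⟩ : Fin b) ≤ (Tuple.sort hX.eigenvalues)⁻¹ i := by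
    simp [Fin.le_def]
  simpa using Tuple.monotone_sort hX.eigenvalues hbottom

lemma sigmaMin_sq_mul_fnorm_sq_le {a b c : ℕ} (X : Matrix (Fin a) (Fin b) ℝ)
    (Y : Matrix (Fin c) (Fin b) ℝ) :
    sigmaMin X ^ 2 * fnorm Y ^ 2 ≤ trace (Xᵀ * X * (Yᵀ * Y)) := by
  have hX : (Xᵀ * X).PosSemidef := by simpa using posSemidef_conjTranspose_mul_self X
  have hgap := hX.isHermitian.posSemidef_sub_smul_one (sigmaMin_sq_le_eigenvalues X hX.isHermitian)
  have hexpand : trace (Y * (Xᵀ * X - sigmaMin X ^ 2 • 1) * Yᴴ) =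
      trace (Xᵀ * X * (Yᵀ * Y)) - sigmaMin X ^ 2 * fnorm Y ^ 2 := by
    rw [fnorm_sq_eq_trace, conjTranspose_eq_transpose_of_trivial, Matrix.mul_sub, Matrix.sub_mul,
      trace_sub, Matrix.mul_smul, Matrix.smul_mul, trace_smul, Matrix.mul_one, trace_mul_comm,
      trace_mul_comm Y, smul_eq_mul, trace_mul_comm (Xᵀ * X)]
    simp only [Matrix.mul_assoc]
  linarith [(hgap.mul_mul_conjTranspose_same Y).trace_nonneg]

theorem statement9_general
    (n r : ℕ)
    (Xhat Z : Matrix (Fin n) (Fin r) ℝ)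
    (P : Matrix (Fin n) (Fin n) ℝ)
    (hPsymm : Pᵀ = P) (hPX : P * Xhat = Xhat)
    (R : Matrix (Fin r) (Fin r) ℝ)
    (Yhat : Matrix (Fin n) (Fin r) ℝ)
    (hY : Yhat = (1 / 2 : ℝ) • Xhat - (1 / 2 : ℝ) • (Xhat * R * Rᵀ) - (1 - P) * Z * Rᵀ) :
    2 * Matrix.trace (Xhatᵀ * Xhat * (Yhatᵀ * Yhat)) ≤
      fnorm (Xhat * Yhatᵀ + Yhat * Xhatᵀ) ^ 2 ∧
    2 * sigmaMin Xhat ^ 2 * fnorm Yhat ^ 2 ≤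
      2 * Matrix.trace (Xhatᵀ * Xhat * (Yhatᵀ * Yhat)) := by
  have hXP : Xhatᵀ * (1 - P) = 0 := by
    rw [Matrix.mul_sub, Matrix.mul_one, ← hPsymm, ← transpose_mul, hPX, sub_self]
  set T : Matrix (Fin r) (Fin r) ℝ := (1 / 2 : ℝ) • (1 - R * Rᵀ)
  have hT : T.IsSymm := by
    simp only [T, IsSymm, transpose_smul, transpose_sub, transpose_one, transpose_mul,
      transpose_transpose]
  have hXY : Xhatᵀ * Yhat = Xhatᵀ * Xhat * T := by
    have hW : Xhatᵀ * ((1 - P) * Z * Rᵀ) = 0 := by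
      rw [Matrix.mul_assoc, ← Matrix.mul_assoc, hXP, Matrix.zero_mul]
    rw [hY, Matrix.mul_sub, hW, sub_zero]
    simp only [T, Matrix.mul_sub, Matrix.mul_smul, Matrix.mul_one, Matrix.mul_assoc, smul_sub]
  constructor
  · rw [fnorm_sq_mul_transpose_add, hXY]
    linarith [trace_gram_mul_sq_nonneg Xhat hT]
  · linarith [sigmaMin_sq_mul_fnorm_sq_le Xhat Yhat]

/-- inequality (25) in the proof of Lemma 3. -/
theorem statement9
    (n r : ℕ) (hrn : r ≤ n)
    (Xhat Z : Matrix (Fin n) (Fin r) ℝ)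
    (P : Matrix (Fin n) (Fin n) ℝ)
    (hPsymm : Pᵀ = P) (hPidem : P * P = P) (hPX : P * Xhat = Xhat)
    (hPrange : ∃ B : Matrix (Fin r) (Fin n) ℝ, P = Xhat * B)
    (R : Matrix (Fin r) (Fin r) ℝ) (hR : P * Z = Xhat * R)
    (Yhat : Matrix (Fin n) (Fin r) ℝ)
    (hY : Yhat = (1 / 2 : ℝ) • Xhat - (1 / 2 : ℝ) • (Xhat * R * Rᵀ) - (1 - P) * Z * Rᵀ) :
    2 * Matrix.trace (Xhatᵀ * Xhat * (Yhatᵀ * Yhat)) ≤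
      fnorm (Xhat * Yhatᵀ + Yhat * Xhatᵀ) ^ 2 ∧
    2 * sigmaMin Xhat ^ 2 * fnorm Yhat ^ 2 ≤
      2 * Matrix.trace (Xhatᵀ * Xhat * (Yhatᵀ * Yhat)) :=
  statement9_general n r Xhat Z P hPsymm hPX R Yhat hY
end
end

section
/- (Core implication in the proof of Theorem 6.) Let f₀(X) = ½‖𝒜(XXᵀ) − b‖² be the noiseless objective. Let D ∈ (0,1] and λ₀ > 0 be constants such that for every X ∈ ℝ^{n×r} with ‖X‖₂ < D there exists U ∈ ℝ^{n×r} with ‖U‖_F = 1 and D²f₀(X)[U,U] < −λ₀. Let ε ∈ (0,λ₀), assume ‖𝐀ᵀw‖ ≤ ε/2, set κ̃ = min{λ₀ − ε, D·ε}, and suppose X̂ ∈ ℝ^{n×r} satisfies ‖∇f(X̂)‖_F ≤ κ̃ and D²f(X̂)[U,U] ≥ −κ̃‖U‖_F² for all U. Then ‖X̂‖₂ ≥ D, ‖∇f(X̂)‖_F ≤ ε·‖X̂‖₂, and D²f(X̂)[U,U] ≥ −ε‖U‖_F² for all U ∈ ℝ^{n×r}. -/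
open scoped BigOperators
open Matrix

noncomputable section

/-! The noise enters `f` only through the cross term `⟨𝒜(XXᵀ) − b, w⟩`, a quadratic form in `X` plus
a constant, so `D²f(X)[U,U] = D²f₀(X)[U,U] + 2⟨w, 𝒜(UUᵀ)⟩`, and
`|⟨w, 𝒜(UUᵀ)⟩| = |⟨𝐀ᵀw, vec(UUᵀ)⟩| ≤ ‖𝐀ᵀw‖ ‖U‖_F² ≤ ε‖U‖_F²/2`. Hence if `‖X̂‖₂ < D`, a direction
of negative curvature of `f₀` gives `D²f(X̂)[U,U] < −λ₀ + ε ≤ −κ̃`, contradicting the second-order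
condition at `X̂`; the other two bounds follow from `κ̃ ≤ Dε ≤ ε‖X̂‖₂` and `D ≤ 1`. -/

section BilinearDiagonal

variable {E F : Type*} [NormedAddCommGroup E] [NormedSpace ℝ E]
  [NormedAddCommGroup F] [NormedSpace ℝ F]

theorem ContinuousLinearMap.hasFDerivAt_bilinear_diag (B : E →L[ℝ] E →L[ℝ] F) (y : E) :
    HasFDerivAt (fun x => B x x) ((B + B.flip) y) y := by
  refine (B.hasFDerivAt_of_bilinear (hasFDerivAt_id y) (hasFDerivAt_id y)).congr_fderiv ?_
  ext u
  simp

theorem ContinuousLinearMap.contDiff_bilinear_diag (B : E →L[ℝ] E →L[ℝ] F) :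
    ContDiff ℝ 2 (fun x => B x x) :=
  B.isBoundedBilinearMap.contDiff.comp (contDiff_id.prodMk contDiff_id)

theorem ContinuousLinearMap.iteratedFDeriv_two_bilinear_diag (B : E →L[ℝ] E →L[ℝ] F)
    (z u v : E) : iteratedFDeriv ℝ 2 (fun x => B x x) z ![u, v] = B u v + B v u := by
  have hD : fderiv ℝ (fun x => B x x) = ⇑(B + B.flip) :=
    funext fun y => (B.hasFDerivAt_bilinear_diag y).fderiv
  rw [iteratedFDeriv_two_apply, hD, ContinuousLinearMap.fderiv]
  simp

end BilinearDiagonal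

section NoisyLeastSquares

variable {E F : Type*} [NormedAddCommGroup E] [NormedSpace ℝ E]
  [NormedAddCommGroup F] [InnerProductSpace ℝ F]

open scoped InnerProductSpace

theorem iteratedFDeriv_two_half_norm_sq_sub_add (B : E →L[ℝ] E →L[ℝ] F) (b w : F) (z u : E) :
    iteratedFDeriv ℝ 2 (fun x => (1 / 2) * ‖B x x - b + w‖ ^ 2) z ![u, u] =
      iteratedFDeriv ℝ 2 (fun x => (1 / 2) * ‖B x x - b‖ ^ 2) z ![u, u] + 2 * ⟪B u u, w⟫_ℝ := by
  set C : E →L[ℝ] E →L[ℝ] ℝ := (ContinuousLinearMap.compL ℝ E F ℝ (innerSL ℝ w)).comp B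
  set c : ℝ := (1 / 2) * ‖w‖ ^ 2 - ⟪b, w⟫_ℝ
  have hsplit : (fun x => (1 / 2) * ‖B x x - b + w‖ ^ 2) =
      fun x => (1 / 2) * ‖B x x - b‖ ^ 2 + (C x x + c) := by
    funext x
    simp only [C, c, ContinuousLinearMap.comp_apply,
      ContinuousLinearMap.compL_apply, innerSL_apply_apply, norm_add_sq_real, inner_sub_right,
      real_inner_comm w]
    ring
  have hg : ContDiff ℝ 2 (fun x => (1 / 2) * ‖B x x - b‖ ^ 2) :=
    contDiff_const.mul ((contDiff_norm_sq ℝ).comp (B.contDiff_bilinear_diag.sub contDiff_const))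
  have hC : ContDiff ℝ 2 (fun x => C x x) := C.contDiff_bilinear_diag
  have hc : ContDiff ℝ 2 (fun _ : E => c) := contDiff_const
  rw [hsplit, fun_iteratedFDeriv_add_apply hg.contDiffAt (hC.add hc).contDiffAt,
    fun_iteratedFDeriv_add_apply hC.contDiffAt hc.contDiffAt,
    iteratedFDeriv_const_of_ne two_ne_zero, Pi.zero_apply, add_zero, _root_.add_apply, C.iteratedFDeriv_two_bilinear_diag]
  simp [C, real_inner_comm w]
  ring

end NoisyLeastSquares

section Frobenius

open scoped Matrix.Norms.Frobenius

theorem fnorm_eq_frobenius_norm {a b : ℕ} (M : Matrix (Fin a) (Fin b) ℝ) : fnorm M = ‖M‖ := by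
  rw [Matrix.frobenius_norm_def, fnorm, Real.sqrt_eq_rpow]
  simp [sq_abs]

theorem fnorm_mul_transpose_self_le {a b : ℕ} (U : Matrix (Fin a) (Fin b) ℝ) :
    fnorm (U * Uᵀ) ≤ fnorm U ^ 2 := by
  simpa [fnorm_eq_frobenius_norm, sq] using Matrix.frobenius_norm_mul U Uᵀ

end Frobenius

theorem enorm'_eq_norm_toLp {k : ℕ} (v : Fin k → ℝ) : enorm' v = ‖WithLp.toLp 2 v‖ := by
  simp [enorm', EuclideanSpace.norm_eq]

theorem abs_dotProduct_le_enorm' {k : ℕ} (u v : Fin k → ℝ) : |u ⬝ᵥ v| ≤ enorm' u * enorm' v := by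
  simpa [enorm'_eq_norm_toLp, EuclideanSpace.inner_toLp_toLp, dotProduct_comm]
    using abs_real_inner_le_norm (WithLp.toLp 2 u) (WithLp.toLp 2 v)

theorem enorm'_vecSq {n : ℕ} (N : Matrix (Fin n) (Fin n) ℝ) : enorm' (vecSq N) = fnorm N := by
  rw [enorm', fnorm, ← Fintype.sum_prod_type']
  exact congrArg Real.sqrt (finProdFinEquiv.symm.sum_comp fun p => N p.1 p.2 ^ 2)

theorem calA_eq_bigA_mulVec {n m : ℕ} (A : Fin m → Matrix (Fin n) (Fin n) ℝ)
    (N : Matrix (Fin n) (Fin n) ℝ) : calA A N = bigA A *ᵥ vecSq N := by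
  ext i
  rw [calA, finner, mulVec, dotProduct, ← Fintype.sum_prod_type']
  exact (finProdFinEquiv.symm.sum_comp fun p => A i p.1 p.2 * N p.1 p.2).symm

theorem abs_dotProduct_calA_le {n m : ℕ} (A : Fin m → Matrix (Fin n) (Fin n) ℝ) (w : Fin m → ℝ)
    (N : Matrix (Fin n) (Fin n) ℝ) : |w ⬝ᵥ calA A N| ≤ enorm' ((bigA A)ᵀ *ᵥ w) * fnorm N := by
  rw [calA_eq_bigA_mulVec, dotProduct_mulVec, ← mulVec_transpose, ← enorm'_vecSq]
  exact abs_dotProduct_le_enorm' _ _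

theorem toMat_add {n r : ℕ} (x y : EuclideanSpace ℝ (Fin n × Fin r)) :
    toMat (x + y) = toMat x + toMat y := rfl

theorem toMat_smul {n r : ℕ} (c : ℝ) (x : EuclideanSpace ℝ (Fin n × Fin r)) :
    toMat (c • x) = c • toMat x := rfl

theorem calA_add {n m : ℕ} (A : Fin m → Matrix (Fin n) (Fin n) ℝ)
    (M N : Matrix (Fin n) (Fin n) ℝ) : calA A (M + N) = calA A M + calA A N := by
  ext i
  simp [calA, finner, mul_add, Finset.sum_add_distrib]

theorem calA_smul {n m : ℕ} (A : Fin m → Matrix (Fin n) (Fin n) ℝ) (c : ℝ)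
    (N : Matrix (Fin n) (Fin n) ℝ) : calA A (c • N) = c • calA A N := by
  ext i
  simp [calA, finner, Finset.mul_sum, mul_left_comm]

def sensingBilin {n m : ℕ} (r : ℕ) (A : Fin m → Matrix (Fin n) (Fin n) ℝ) :
    EuclideanSpace ℝ (Fin n × Fin r) →L[ℝ] EuclideanSpace ℝ (Fin n × Fin r) →L[ℝ]
      EuclideanSpace ℝ (Fin m) :=
  LinearMap.toContinuousLinearMap <| LinearMap.toContinuousLinearMap.toLinearMap ∘ₗ
    LinearMap.mk₂ ℝ (fun x y => WithLp.toLp 2 (calA A (toMat x * (toMat y)ᵀ)))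
      (fun x x' y => by simp [toMat_add, Matrix.add_mul, calA_add])
      (fun c x y => by simp [toMat_smul, calA_smul])
      (fun x y y' => by simp [toMat_add, Matrix.mul_add, calA_add])
      (fun c x y => by simp [toMat_smul, calA_smul])

@[simp]
theorem sensingBilin_apply {n m : ℕ} (r : ℕ) (A : Fin m → Matrix (Fin n) (Fin n) ℝ)
    (x y : EuclideanSpace ℝ (Fin n × Fin r)) :
    sensingBilin r A x y = WithLp.toLp 2 (calA A (toMat x * (toMat y)ᵀ)) := rfl

theorem fE_eq_half_norm_sq {n m : ℕ} (r : ℕ) (A : Fin m → Matrix (Fin n) (Fin n) ℝ)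
    (Mstar : Matrix (Fin n) (Fin n) ℝ) (w : Fin m → ℝ) :
    fE r A Mstar w = fun x => (1 / 2) *
      ‖sensingBilin r A x x - WithLp.toLp 2 (calA A Mstar) + WithLp.toLp 2 w‖ ^ 2 := by
  funext x
  rw [fE, fobj, enorm'_eq_norm_toLp]
  rfl

theorem hessQF_eq_noiseless_add {n m : ℕ} (r : ℕ) (A : Fin m → Matrix (Fin n) (Fin n) ℝ)
    (Mstar : Matrix (Fin n) (Fin n) ℝ) (w : Fin m → ℝ) (X U : Matrix (Fin n) (Fin r) ℝ) :
    hessQF r A Mstar w X U = hessQF r A Mstar (fun _ => 0) X U + 2 * (w ⬝ᵥ calA A (U * Uᵀ)) := by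
  have h0 : WithLp.toLp 2 (fun _ : Fin m => (0 : ℝ)) = 0 := rfl
  rw [hessQF, hessQF, fE_eq_half_norm_sq, fE_eq_half_norm_sq, h0,
    iteratedFDeriv_two_half_norm_sq_sub_add]
  simp only [add_zero, sensingBilin_apply, EuclideanSpace.inner_toLp_toLp, star_trivial]
  rfl

theorem abs_hessQF_sub_noiseless_le {n m : ℕ} (r : ℕ) (A : Fin m → Matrix (Fin n) (Fin n) ℝ)
    (Mstar : Matrix (Fin n) (Fin n) ℝ) (w : Fin m → ℝ) (X U : Matrix (Fin n) (Fin r) ℝ) :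
    |hessQF r A Mstar w X U - hessQF r A Mstar (fun _ => 0) X U| ≤
      2 * enorm' ((bigA A)ᵀ *ᵥ w) * fnorm U ^ 2 := by
  rw [hessQF_eq_noiseless_add, add_sub_cancel_left, abs_mul, abs_two, mul_assoc]
  gcongr
  exact (abs_dotProduct_calA_le A w _).trans
    (mul_le_mul_of_nonneg_left (fnorm_mul_transpose_self_le U) (Real.sqrt_nonneg _))

theorem statement16_general
    (n m r : ℕ)
    (A : Fin m → Matrix (Fin n) (Fin n) ℝ)
    (Mstar : Matrix (Fin n) (Fin n) ℝ)
    (w : Fin m → ℝ)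
    (D lam0 : ℝ) (hD1 : D ≤ 1)
    (hsaddle : ∀ X : Matrix (Fin n) (Fin r) ℝ, specNorm X < D →
      ∃ U : Matrix (Fin n) (Fin r) ℝ, fnorm U = 1 ∧
        hessQF r A Mstar (fun _ => 0) X U < -lam0)
    (ε : ℝ) (hε0 : 0 < ε)
    (hw : enorm' (Matrix.mulVec (bigA A)ᵀ w) ≤ ε / 2)
    (Xhat : Matrix (Fin n) (Fin r) ℝ)
    (hgrad : fnorm (gradf r A Mstar w Xhat) ≤ min (lam0 - ε) (D * ε))
    (hhess : ∀ U : Matrix (Fin n) (Fin r) ℝ,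
      -(min (lam0 - ε) (D * ε) * fnorm U ^ 2) ≤ hessQF r A Mstar w Xhat U) :
    D ≤ specNorm Xhat ∧
    fnorm (gradf r A Mstar w Xhat) ≤ ε * specNorm Xhat ∧
    (∀ U : Matrix (Fin n) (Fin r) ℝ,
      -(ε * fnorm U ^ 2) ≤ hessQF r A Mstar w Xhat U) := by
  have hnoise (U : Matrix (Fin n) (Fin r) ℝ) :
      |hessQF r A Mstar w Xhat U - hessQF r A Mstar (fun _ => 0) Xhat U| ≤ ε * fnorm U ^ 2 :=
    (abs_hessQF_sub_noiseless_le r A Mstar w Xhat U).trans (by gcongr; linarith)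
  have hκ : min (lam0 - ε) (D * ε) ≤ D * ε := min_le_right _ _
  have hD : D ≤ specNorm Xhat := by
    by_contra! hsmall
    obtain ⟨U, hU, hneg⟩ := hsaddle Xhat hsmall
    have hcurv := hhess U
    have hpert := (abs_le.1 (hnoise U)).2
    rw [hU, one_pow, mul_one] at hcurv hpert
    linarith [min_le_left (lam0 - ε) (D * ε)]
  refine ⟨hD, hgrad.trans (hκ.trans ?_), fun U => (neg_le_neg ?_).trans (hhess U)⟩
  · rw [mul_comm]
    exact mul_le_mul_of_nonneg_left hD hε0.le
  · gcongr
    exact hκ.trans (mul_le_of_le_one_left hε0.le hD1)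

/-- core implication in the proof of Theorem 6. -/
theorem statement16
    (n m r rs : ℕ) (hrs : 1 ≤ rs) (hrrs : rs ≤ r)
    (A : Fin m → Matrix (Fin n) (Fin n) ℝ)
    (Mstar : Matrix (Fin n) (Fin n) ℝ) (hM : Mstar.PosSemidef) (hrank : Mstar.rank = rs)
    (w : Fin m → ℝ)
    (D lam0 : ℝ) (hD0 : 0 < D) (hD1 : D ≤ 1) (hlam : 0 < lam0)
    (hsaddle : ∀ X : Matrix (Fin n) (Fin r) ℝ, specNorm X < D →
      ∃ U : Matrix (Fin n) (Fin r) ℝ, fnorm U = 1 ∧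
        hessQF r A Mstar (fun _ => 0) X U < -lam0)
    (ε : ℝ) (hε0 : 0 < ε) (hε1 : ε < lam0)
    (hw : enorm' (Matrix.mulVec (bigA A)ᵀ w) ≤ ε / 2)
    (Xhat : Matrix (Fin n) (Fin r) ℝ)
    (hgrad : fnorm (gradf r A Mstar w Xhat) ≤ min (lam0 - ε) (D * ε))
    (hhess : ∀ U : Matrix (Fin n) (Fin r) ℝ,
      -(min (lam0 - ε) (D * ε) * fnorm U ^ 2) ≤ hessQF r A Mstar w Xhat U) :
    D ≤ specNorm Xhat ∧
    fnorm (gradf r A Mstar w Xhat) ≤ ε * specNorm Xhat ∧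
    (∀ U : Matrix (Fin n) (Fin r) ℝ,
      -(ε * fnorm U ^ 2) ≤ hessQF r A Mstar w Xhat U) :=
  statement16_general n m r A Mstar w D lam0 hD1 hsaddle ε hε0 hw Xhat hgrad hhess
end
end
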